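/- arXiv:2311.12973 — 2 statements merged into one kernel-verified Lean document; each statement's English description precedes it below -/
import Mathlib

section
/- With the same systematic-resampling setup, for every j the integer ncopies j satisfies |ncopies j - N * w̃ j| < 1; equivalently ncopies j ∈ {⌊N * w̃ j⌋, ⌈N * w̃ j⌉}. -/
/-! Since `cdf (j + 1) = cdf j + N w̃ⱼ`, the number of copies is `⌈a + d⌉ - ⌈a⌉` with `a = cdf j - u`
and `d = N w̃ⱼ`. Ceiling is subadditive, and `⌈a⌉ + ⌊d⌋ = ⌈a + ⌊d⌋⌉ ≤ ⌈a + d⌉`, so this difference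
lies between `⌊d⌋` and `⌈d⌉ ≤ ⌊d⌋ + 1`. -/

open Finset

namespace Int

variable {R : Type*} [Ring R] [LinearOrder R] [IsStrictOrderedRing R] [FloorRing R]

theorem ceil_add_sub_ceil_eq_floor_or_ceil (a d : R) :
    ⌈a + d⌉ - ⌈a⌉ = ⌊d⌋ ∨ ⌈a + d⌉ - ⌈a⌉ = ⌈d⌉ := by
  have hle : ⌈a + d⌉ ≤ ⌈a⌉ + ⌈d⌉ := ceil_add_le a d
  have hge : ⌈a⌉ + ⌊d⌋ ≤ ⌈a + d⌉ := by
    rw [← ceil_add_intCast]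
    exact ceil_mono (add_le_add_right (floor_le d) a)
  have hceil : ⌈d⌉ ≤ ⌊d⌋ + 1 := ceil_le_floor_add_one d
  omega

theorem abs_sub_lt_one_of_eq_floor_or_ceil {n : ℤ} {d : R} (h : n = ⌊d⌋ ∨ n = ⌈d⌉) :
    |(n : R) - d| < 1 := by
  rw [abs_sub_lt_iff]
  rcases h with rfl | rfl
  · exact ⟨(sub_nonpos.2 (floor_le d)).trans_lt one_pos, sub_lt_comm.1 (sub_one_lt_floor d)⟩
  · exact ⟨sub_lt_iff_lt_add'.2 (ceil_lt_add_one d), (sub_nonpos.2 (le_ceil d)).trans_lt one_pos⟩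

end Int

namespace Fin

variable {N : ℕ}

theorem Iio_eq_empty_of_val_eq_zero {j : Fin N} (h : (j : ℕ) = 0) : Iio j = ∅ := by
  ext i
  simp only [mem_Iio, lt_def, notMem_empty, iff_false]
  omega

theorem Iio_eq_Iic_of_val_add_one_eq {i j : Fin N} (h : (i : ℕ) + 1 = j) : Iio j = Iic i := by
  ext k
  simp only [mem_Iio, mem_Iic, lt_def, le_def]
  omega

end Fin

section CumulativeSum

variable {N : ℕ} {w : Fin N → ℝ} {cdf : ℕ → ℝ}

theorem cdf_eq_mul_sum_Iio (hcdf0 : cdf 0 = 0)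
    (hcdf : ∀ j : Fin N, cdf (j + 1) = N * ∑ i ∈ univ.filter (· ≤ j), w i) (j : Fin N) :
    cdf j = N * ∑ i ∈ Iio j, w i := by
  cases hj : (j : ℕ) with
  | zero => rw [hcdf0, Fin.Iio_eq_empty_of_val_eq_zero hj, sum_empty, mul_zero]
  | succ k =>
    let i : Fin N := ⟨k, by omega⟩
    rw [Fin.Iio_eq_Iic_of_val_add_one_eq (i := i) hj.symm, ← filter_ge_eq_Iic]
    exact hcdf i

theorem cdf_succ_sub_cdf (hcdf0 : cdf 0 = 0)
    (hcdf : ∀ j : Fin N, cdf (j + 1) = N * ∑ i ∈ univ.filter (· ≤ j), w i) (j : Fin N) :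
    cdf (j + 1) - cdf j = N * w j := by
  rw [hcdf j, cdf_eq_mul_sum_Iio hcdf0 hcdf j, filter_ge_eq_Iic, ← Iio_insert,
    sum_insert notMem_Iio_self, mul_add, add_sub_cancel_right]

end CumulativeSum

theorem systematic_resampling_copies_near_expected_general
    (N : ℕ) (w : Fin N → ℝ)
    (cdf : ℕ → ℝ) (hcdf0 : cdf 0 = 0)
    (hcdf : ∀ j : Fin N, cdf (j + 1) = N * ∑ i ∈ Finset.univ.filter (· ≤ j), w i)
    (u : ℝ)
    (ncopies : Fin N → ℤ)
    (hnc : ∀ j : Fin N, ncopies j = ⌈cdf (j + 1) - u⌉ - ⌈cdf (j : ℕ) - u⌉) :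
    ∀ j, |(ncopies j : ℝ) - N * w j| < 1 ∧
      (ncopies j = ⌊(N : ℝ) * w j⌋ ∨ ncopies j = ⌈(N : ℝ) * w j⌉) := by
  intro j
  have hcopies : ncopies j = ⌈(cdf j - u) + N * w j⌉ - ⌈cdf j - u⌉ := by
    rw [hnc j, ← cdf_succ_sub_cdf hcdf0 hcdf j, sub_add_sub_cancel']
  have hmem := Int.ceil_add_sub_ceil_eq_floor_or_ceil (cdf j - u) (N * w j)
  rw [← hcopies] at hmem
  exact ⟨Int.abs_sub_lt_one_of_eq_floor_or_ceil hmem, hmem⟩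

theorem systematic_resampling_copies_near_expected
    (N : ℕ) (hN : 1 ≤ N) (w : Fin N → ℝ) (hw : ∀ i, 0 ≤ w i)
    (hsum : ∑ i, w i = 1)
    (cdf : ℕ → ℝ) (hcdf0 : cdf 0 = 0)
    (hcdf : ∀ j : Fin N, cdf (j + 1) = N * ∑ i ∈ Finset.univ.filter (· ≤ j), w i)
    (u : ℝ) (hu : u ∈ Set.Ioo (0 : ℝ) 1)
    (ncopies : Fin N → ℤ)
    (hnc : ∀ j : Fin N, ncopies j = ⌈cdf (j + 1) - u⌉ - ⌈cdf (j : ℕ) - u⌉) :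
    ∀ j, |(ncopies j : ℝ) - N * w j| < 1 ∧
      (ncopies j = ⌊(N : ℝ) * w j⌋ ∨ ncopies j = ⌈(N : ℝ) * w j⌉) :=
  systematic_resampling_copies_near_expected_general N w cdf hcdf0 hcdf u ncopies hnc
end

section
/- Let a ≤ b be reals. If u is uniformly distributed on [0,1], then the expected value of ⌈b - u⌉ - ⌈a - u⌉ equals b - a. In particular, for systematic resampling, E_u[ncopies j] = N * w̃ j. -/
/-! The function `t ↦ ⌈t⌉ - t` is `1`-periodic with mean `1/2`, so `⌈·⌉` integrates to
`x + 1` over every interval `[x, x + 1]`. Substituting `t = c - u` gives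
`∫₀¹ ⌈c - u⌉ du = c`, and the theorem is the difference of these integrals at `c = b` and
`c = a`. -/

open MeasureTheory intervalIntegral

theorem intervalIntegrable_intCast_ceil (μ : Measure ℝ) [IsLocallyFiniteMeasure μ] (x y : ℝ) :
    IntervalIntegrable (fun t : ℝ => (⌈t⌉ : ℝ)) μ x y :=
  Monotone.intervalIntegrable fun _ _ hst => by exact_mod_cast Int.ceil_le_ceil hst

theorem periodic_intCast_ceil_sub_self : Function.Periodic (fun t : ℝ => (⌈t⌉ : ℝ) - t) 1 := by
  intro t
  simp only [Int.ceil_add_one, Int.cast_add, Int.cast_one]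
  ring

theorem integral_intCast_ceil_zero_one : ∫ t in (0 : ℝ)..1, (⌈t⌉ : ℝ) = 1 := by
  have hceil : ∀ t ∈ Set.Ioc (0 : ℝ) 1, (⌈t⌉ : ℝ) = 1 := fun t ht => by
    rw [(Int.ceil_eq_iff (z := 1)).mpr ⟨by simpa using ht.1, by simpa using ht.2⟩, Int.cast_one]
  rw [integral_of_le zero_le_one, setIntegral_congr_fun measurableSet_Ioc hceil]
  simp

theorem integral_intCast_ceil_add_one (x : ℝ) :
    ∫ t in x..x + 1, (⌈t⌉ : ℝ) = x + 1 := by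
  have hmean : ∫ t in x..x + 1, ((⌈t⌉ : ℝ) - t) = 1 / 2 := by
    rw [periodic_intCast_ceil_sub_self.intervalIntegral_add_eq x 0, zero_add,
      integral_sub (intervalIntegrable_intCast_ceil volume 0 1) intervalIntegrable_id,
      integral_intCast_ceil_zero_one, integral_id]
    norm_num
  calc ∫ t in x..x + 1, (⌈t⌉ : ℝ)
      = (∫ t in x..x + 1, ((⌈t⌉ : ℝ) - t)) + ∫ t in x..x + 1, t := by
        rw [← integral_add ((intervalIntegrable_intCast_ceil volume _ _).sub intervalIntegrable_id)
          intervalIntegrable_id]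
        simp
    _ = x + 1 := by
        rw [hmean, integral_id]
        ring

theorem integral_intCast_ceil_sub_zero_one (c : ℝ) :
    ∫ u in (0 : ℝ)..1, (⌈c - u⌉ : ℝ) = c := by
  have h := integral_intCast_ceil_add_one (c - 1)
  rw [sub_add_cancel] at h
  rw [integral_comp_sub_left (fun t : ℝ => (⌈t⌉ : ℝ)) c, sub_zero, h]

theorem systematic_resampling_unbiased_general
    (a b : ℝ) :
    ∫ u in (0:ℝ)..1, ((⌈b - u⌉ - ⌈a - u⌉ : ℤ) : ℝ) = b - a := by
  have hint (c : ℝ) : IntervalIntegrable (fun u : ℝ => (⌈c - u⌉ : ℝ)) volume 0 1 :=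
    Antitone.intervalIntegrable fun _ _ hst => by exact_mod_cast Int.ceil_le_ceil (by linarith)
  simp only [Int.cast_sub]
  rw [integral_sub (hint b) (hint a), integral_intCast_ceil_sub_zero_one,
    integral_intCast_ceil_sub_zero_one]

theorem systematic_resampling_unbiased
    (a b : ℝ) (hab : a ≤ b) :
    ∫ u in (0:ℝ)..1, ((⌈b - u⌉ - ⌈a - u⌉ : ℤ) : ℝ) = b - a :=
  systematic_resampling_unbiased_general a b
end
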